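/- Euler-type integral representation of the Lauricella function: let N be a positive integer, a = (a₁, …, a_N) ∈ ℂ^N, and b, c ∈ ℂ with Re c > Re b > 0; let x = (x₁, …, x_N) ∈ ℂ^N with |x_j| < 1 for all j. Then the Lauricella series F_D^{(N)}(a; b, c; x) := ∑_{m ∈ ℕ^N} [ (b)_{|m|} ∏_{j=1}^N (a_j)_{m_j} / ( (c)_{|m|} ∏_{j=1}^N m_j! ) ] ∏_{j=1}^N x_j^{m_j}, where |m| = m₁ + … + m_N, converges and equals (Γ(c)/(Γ(b)Γ(c−b))) ∫₀¹ t^{b−1} (1−t)^{c−b−1} ∏_{j=1}^N (1 − t x_j)^{−a_j} dt, where all complex powers are taken with the principal branch. -/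

import Mathlib

open Complex

/-- The Pochhammer symbol `(z)_m = z (z+1) ⋯ (z+m-1)`. -/
noncomputable def poch (z : ℂ) (m : ℕ) : ℂ := (ascPochhammer ℂ m).eval z

lemma poch_zero (z : ℂ) : poch z 0 = 1 := by simp [poch]

lemma poch_succ (z : ℂ) (n : ℕ) : poch z (n + 1) = poch z n * (z + n) := by
  simp [poch, ascPochhammer_succ_eval]

lemma slit {z : ℂ} (hz : ‖z‖ < 1) : (1 : ℂ) - z ∈ slitPlane := by
  refine Or.inl ?_
  have : z.re ≤ ‖z‖ := Complex.re_le_norm z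
  simp only [sub_re, one_re]
  linarith

lemma hasDeriv_pow (w : ℂ) {z : ℂ} (hz : ‖z‖ < 1) :
    HasDerivAt (fun z : ℂ => (1 - z) ^ w) (-w * (1 - z) ^ (w - 1)) z := by
  have h : HasDerivAt (fun z : ℂ => 1 - z) (-1) z := by
    simpa using ((hasDerivAt_id z).const_sub 1)
  have := h.cpow_const (c := w) (slit hz)
  convert this using 1
  ring

lemma iter_deriv (a : ℂ) (n : ℕ) : ∀ z ∈ Metric.ball (0:ℂ) 1,
    iteratedDeriv n (fun z : ℂ => (1 - z) ^ (-a)) z = poch a n * (1 - z) ^ (-a - n) := by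
  induction n with
  | zero => intro z hz; simp [poch_zero]
  | succ n ih =>
      intro z hz
      rw [iteratedDeriv_succ]
      have hev : (iteratedDeriv n (fun z : ℂ => (1 - z) ^ (-a)))
          =ᶠ[nhds z] (fun z => poch a n * (1 - z) ^ (-a - n)) := by
        filter_upwards [Metric.isOpen_ball.mem_nhds hz] with w hw using ih w hw
      rw [hev.deriv_eq]
      have hz' : ‖z‖ < 1 := by simpa [Metric.mem_ball] using hz
      have hd := ((hasDeriv_pow (-a - n) hz').const_mul (poch a n)).deriv
      rw [hd, poch_succ]
      rw [show -a - n - 1 = -a - (n + 1 : ℕ) by push_cast; ring]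
      ring

lemma binom_hasSum (a : ℂ) {u : ℂ} (hu : ‖u‖ < 1) :
    HasSum (fun n : ℕ => poch a n / n.factorial * u ^ n) ((1 - u) ^ (-a)) := by
  have hdiff : DifferentiableOn ℂ (fun z : ℂ => (1 - z) ^ (-a)) (Metric.ball 0 1) := by
    intro z hz
    have hz' : ‖z‖ < 1 := by simpa [Metric.mem_ball] using hz
    exact ((hasDeriv_pow (-a) hz').differentiableAt).differentiableWithinAt
  have hu' : u ∈ Metric.ball (0:ℂ) 1 := by simpa [Metric.mem_ball] using hu
  have H := Complex.hasSum_taylorSeries_on_ball hdiff hu'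
  have h0 : (0:ℂ) ∈ Metric.ball (0:ℂ) 1 := by simp
  refine H.congr_fun fun n => ?_
  rw [iter_deriv a n 0 h0]
  simp [smul_eq_mul, one_cpow]
  ring

noncomputable def pochR (z : ℝ) (m : ℕ) : ℝ := (ascPochhammer ℝ m).eval z
lemma pochR_zero (z : ℝ) : pochR z 0 = 1 := by simp [pochR]
lemma pochR_succ (z : ℝ) (n : ℕ) : pochR z (n + 1) = pochR z n * (z + n) := by
  simp [pochR, ascPochhammer_succ_eval]

lemma poch_ofReal (α : ℝ) (n : ℕ) : poch (α : ℂ) n = (pochR α n : ℂ) := by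
  induction n with
  | zero => simp [poch_zero, pochR_zero]
  | succ n ih => rw [poch_succ, pochR_succ, ih]; push_cast; ring

lemma pochR_pos {α : ℝ} (hα : 0 < α) (n : ℕ) : 0 < pochR α n := by
  induction n with
  | zero => simp [pochR_zero]
  | succ n ih => rw [pochR_succ]; positivity

lemma abs_poch_le (a : ℂ) (n : ℕ) : ‖poch a n‖ ≤ pochR (‖a‖ + 1) n := by
  induction n with
  | zero => simp [poch_zero, pochR_zero]
  | succ n ih =>
      rw [poch_succ, pochR_succ, norm_mul]
      have h1 : ‖a + n‖ ≤ ‖a‖ + 1 + n := by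
        calc ‖a + n‖ ≤ ‖a‖ + ‖(n : ℂ)‖ := norm_add_le _ _
        _ ≤ ‖a‖ + 1 + n := by simp [Complex.norm_natCast]
      exact mul_le_mul ih h1 (norm_nonneg _) (le_of_lt (pochR_pos (by positivity) n))

lemma summable_norm_binom (a : ℂ) {r : ℝ} (h0 : 0 ≤ r) (hr : r < 1) :
    Summable (fun n : ℕ => ‖poch a n‖ / n.factorial * r ^ n) := by
  set α : ℝ := ‖a‖ + 1 with hα
  set s : ℝ := (r + 1) / 2 with hs
  have hs0 : 0 ≤ s := by positivity
  have hs1 : s < 1 := by rw [hs]; linarith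
  have hrs : r ≤ s := by rw [hs]; linarith
  have H := (binom_hasSum (α : ℂ) (u := (s : ℂ)) (by
    rwa [Complex.norm_real, Real.norm_eq_abs, _root_.abs_of_nonneg hs0])).summable
  have Hre : Summable (fun n : ℕ => pochR α n / n.factorial * s ^ n) := by
    have := H.map Complex.reCLM Complex.continuous_re
    refine this.congr fun n => ?_
    simp only [Function.comp_apply, poch_ofReal, Complex.reCLM_apply]
    rw [show ((pochR α n : ℂ) / (n.factorial : ℂ) * (s : ℂ) ^ n)
        = ((pochR α n / n.factorial * s ^ n : ℝ) : ℂ) by push_cast; ring]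
    exact Complex.ofReal_re _
  refine Summable.of_nonneg_of_le (fun n => by positivity) (fun n => ?_) Hre
  have h1 := abs_poch_le a n
  have h2 : r ^ n ≤ s ^ n := pow_le_pow_left₀ h0 hrs n
  have hf : (0:ℝ) < n.factorial := by positivity
  have h3 : ‖poch a n‖ / n.factorial ≤ pochR α n / n.factorial := by
    gcongr
  exact mul_le_mul h3 h2 (pow_nonneg h0 n) (div_nonneg (pochR_pos (by positivity) n).le (by positivity))

lemma pi_tsum {N : ℕ} (f : Fin N → ℕ → ℂ)
    (h : ∀ j, Summable fun n => ‖f j n‖) :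
    Summable (fun m : Fin N → ℕ => ‖∏ j, f j (m j)‖) ∧
    (∑' m : Fin N → ℕ, ∏ j, f j (m j)) = ∏ j, ∑' n, f j n := by
  induction N with
  | zero =>
      constructor
      · exact Summable.of_finite
      · simp
  | succ N ih =>
      obtain ⟨ihS, ihT⟩ := ih (fun j => f j.succ) (fun j => h j.succ)
      set e : (ℕ × (Fin N → ℕ)) ≃ (Fin (N + 1) → ℕ) := Fin.consEquiv (fun _ => ℕ) with he
      have key : ∀ p : ℕ × (Fin N → ℕ),
          (∏ j, f j (e p j)) = f 0 p.1 * ∏ j, f j.succ (p.2 j) := by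
        intro p
        rw [Fin.prod_univ_succ]
        simp [he, Fin.consEquiv]
      have hprod : Summable (fun p : ℕ × (Fin N → ℕ) =>
          ‖f 0 p.1 * ∏ j, f j.succ (p.2 j)‖) := by
        apply Summable.mul_norm (h 0) ihS
      have hT : (∑' n, f 0 n) * (∑' m : Fin N → ℕ, ∏ j, f j.succ (m j))
          = ∑' p : ℕ × (Fin N → ℕ), f 0 p.1 * ∏ j, f j.succ (p.2 j) := by
        apply tsum_mul_tsum_of_summable_norm (h 0) ihS
      constructor
      · rw [← e.summable_iff]
        exact hprod.congr fun p => by rw [Function.comp_apply, key p]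
      · rw [← e.tsum_eq (fun m : Fin (N+1) → ℕ => ∏ j, f j (m j))]
        calc (∑' p : ℕ × (Fin N → ℕ), ∏ j, f j (e p j))
            = ∑' p : ℕ × (Fin N → ℕ), f 0 p.1 * ∏ j, f j.succ (p.2 j) := tsum_congr key
          _ = (∑' n, f 0 n) * ∑' m : Fin N → ℕ, ∏ j, f j.succ (m j) := hT.symm
          _ = ∏ j, ∑' n, f j n := by rw [ihT, Fin.prod_univ_succ]

lemma Gamma_poch {z : ℂ} (hz : 0 < z.re) (n : ℕ) :
    Complex.Gamma (z + n) = poch z n * Complex.Gamma z := by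
  induction n with
  | zero => simp [poch_zero]
  | succ n ih =>
      have hne : z + n ≠ 0 := by
        intro h
        have h2 : (z + (n:ℂ)).re = 0 := by rw [h]; simp
        simp only [add_re, natCast_re] at h2
        have : (0:ℝ) ≤ (n:ℝ) := Nat.cast_nonneg n
        linarith
      have : z + (n + 1 : ℕ) = (z + n) + 1 := by push_cast; ring
      rw [this, Complex.Gamma_add_one _ hne, ih, poch_succ]
      ring

lemma poch_ne_zero {z : ℂ} (hz : 0 < z.re) (n : ℕ) : poch z n ≠ 0 := by
  induction n with
  | zero => simp [poch_zero]
  | succ n ih =>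
      rw [poch_succ]
      refine mul_ne_zero ih fun h => ?_
      have h2 : (z + (n:ℂ)).re = 0 := by rw [h]; simp
      simp only [add_re, natCast_re] at h2
      have : (0:ℝ) ≤ (n:ℝ) := Nat.cast_nonneg n
      linarith

lemma coeff_eq {b c : ℂ} (hb : 0 < b.re) (hbc : b.re < c.re) (n : ℕ) :
    Complex.Gamma c / (Complex.Gamma b * Complex.Gamma (c - b)) *
      Complex.betaIntegral (b + n) (c - b) = poch b n / poch c n := by
  have hcb : 0 < (c - b).re := by simp only [sub_re]; linarith
  have hc : 0 < c.re := lt_trans hb hbc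
  have hbn : 0 < (b + (n:ℂ)).re := by
    simp only [add_re, natCast_re]
    have : (0:ℝ) ≤ (n:ℝ) := Nat.cast_nonneg n
    linarith
  have key := Complex.Gamma_mul_Gamma_eq_betaIntegral hbn hcb
  rw [show b + n + (c - b) = c + n by ring] at key
  have hGb : Complex.Gamma b ≠ 0 := Complex.Gamma_ne_zero_of_re_pos hb
  have hGcb : Complex.Gamma (c - b) ≠ 0 := Complex.Gamma_ne_zero_of_re_pos hcb
  have hpc : poch c n ≠ 0 := poch_ne_zero hc n
  rw [Gamma_poch hb n, Gamma_poch hc n] at key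
  rw [div_mul_eq_mul_div, div_eq_div_iff (mul_ne_zero hGb hGcb) hpc]
  linear_combination -key

open MeasureTheory

theorem lauricella_euler_integral (N : ℕ) (hN : 0 < N)
    (a : Fin N → ℂ) (b c : ℂ) (hb : 0 < b.re) (hbc : b.re < c.re)
    (x : Fin N → ℂ) (hx : ∀ j, ‖x j‖ < 1) :
    HasSum
      (fun m : Fin N → ℕ =>
        (poch b (∑ j, m j) * ∏ j, poch (a j) (m j)) /
            (poch c (∑ j, m j) * ∏ j, (Nat.factorial (m j) : ℂ)) *
          ∏ j, x j ^ m j)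
      (Complex.Gamma c / (Complex.Gamma b * Complex.Gamma (c - b)) *
        ∫ t in (0:ℝ)..1, (t : ℂ) ^ (b - 1) * ((1 : ℂ) - (t : ℂ)) ^ (c - b - 1) *
          ∏ j, ((1 : ℂ) - (t : ℂ) * x j) ^ (-(a j))) := by
  classical
  have hc : 0 < c.re := lt_trans hb hbc
  have hcb : 0 < (c - b).re := by simp only [sub_re]; linarith
  set K : ℂ := Complex.Gamma c / (Complex.Gamma b * Complex.Gamma (c - b)) with hK
  set φ : Fin N → ℕ → ℂ := fun j n => poch (a j) n / n.factorial * x j ^ n with hφ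
  set cm : (Fin N → ℕ) → ℂ := fun m => ∏ j, φ j (m j) with hcm
  set G : ℕ → ℝ → ℂ :=
    fun n t => (t : ℂ) ^ (b + n - 1) * (1 - (t:ℂ)) ^ (c - b - 1) with hG
  set F : (Fin N → ℕ) → ℝ → ℂ := fun m t => cm m * G (∑ j, m j) t with hF
  set μ : Measure ℝ := volume.restrict (Set.Ioc (0:ℝ) 1) with hμ
  have hφnorm : ∀ (j : Fin N) (n : ℕ),
      ‖φ j n‖ = ‖poch (a j) n‖ / n.factorial * (‖x j‖) ^ n := by
    intro j n
    simp [hφ, map_mul, map_div₀, Complex.norm_natCast, map_pow]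
  have hφsum : ∀ j, Summable fun n => ‖φ j n‖ := by
    intro j
    refine (summable_norm_binom (a j) (norm_nonneg _) (hx j)).congr fun n =>
      (hφnorm j n).symm
  have hcmsum : Summable (fun m : Fin N → ℕ => ‖cm m‖) := (pi_tsum φ hφsum).1
  have hbn : ∀ n : ℕ, 0 < (b + (n:ℂ)).re := by
    intro n
    simp only [add_re, natCast_re]
    have : (0:ℝ) ≤ (n:ℝ) := Nat.cast_nonneg n
    linarith
  have hGint : ∀ n : ℕ, IntegrableOn (G n) (Set.Ioc (0:ℝ) 1) := by
    intro n
    have h := Complex.betaIntegral_convergent (hbn n) hcb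
    rw [intervalIntegrable_iff_integrableOn_Ioc_of_le zero_le_one] at h
    exact h
  have hFint : ∀ m, IntegrableOn (F m) (Set.Ioc (0:ℝ) 1) := by
    intro m
    exact (hGint (∑ j, m j)).const_mul (cm m)
  set L : ENNReal := ∫⁻ t, ‖G 0 t‖₊ ∂μ with hL
  have hLne : L ≠ ⊤ := (hGint 0).hasFiniteIntegral.ne
  have hGbound : ∀ (n : ℕ), ∀ t ∈ Set.Ioc (0:ℝ) 1, ‖G n t‖ ≤ ‖G 0 t‖ := by
    intro n t ht
    simp only [hG, norm_mul]
    refine mul_le_mul_of_nonneg_right ?_ (norm_nonneg _)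
    rw [
      Complex.norm_cpow_eq_rpow_re_of_pos ht.1, Complex.norm_cpow_eq_rpow_re_of_pos ht.1]
    apply Real.rpow_le_rpow_of_exponent_ge ht.1 ht.2
    simp only [sub_re, add_re, natCast_re, one_re, Nat.cast_zero, Complex.zero_re]
    have : (0:ℝ) ≤ (n:ℝ) := Nat.cast_nonneg n
    linarith
  have hFlin : ∀ m, (∫⁻ t, ‖F m t‖₊ ∂μ) ≤ (‖cm m‖₊ : ENNReal) * L := by
    intro m
    have e1 : (∫⁻ t, ‖F m t‖₊ ∂μ)
        = (‖cm m‖₊ : ENNReal) * ∫⁻ t, ‖G (∑ j, m j) t‖₊ ∂μ := by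
      rw [← MeasureTheory.lintegral_const_mul' _ _ ENNReal.coe_ne_top]
      refine lintegral_congr fun t => ?_
      rw [hF]
      simp [nnnorm_mul]
    rw [e1]
    refine mul_le_mul_right ?_ _
    refine lintegral_mono_ae ?_
    filter_upwards [ae_restrict_mem measurableSet_Ioc] with t ht
    have := hGbound (∑ j, m j) t ht
    exact_mod_cast ENNReal.coe_le_coe.2 (by exact_mod_cast this)
  have hcmsum' : Summable (fun m : Fin N → ℕ => ‖cm m‖₊) := by
    rw [← NNReal.summable_coe]
    exact hcmsum
  have htsum_lin : (∑' m : Fin N → ℕ, ∫⁻ t, ‖F m t‖₊ ∂μ) ≠ ⊤ := by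
    refine ne_top_of_le_ne_top ?_ (ENNReal.tsum_le_tsum hFlin)
    rw [ENNReal.tsum_mul_right]
    exact ENNReal.mul_ne_top (ENNReal.tsum_coe_ne_top_iff_summable.2 hcmsum') hLne
  have hswap : (∫ t, (∑' m : Fin N → ℕ, F m t) ∂μ) = ∑' m : Fin N → ℕ, ∫ t, F m t ∂μ :=
    integral_tsum (fun m => (hFint m).aestronglyMeasurable) htsum_lin
  -- pointwise identity on (0,1)
  have hpt : ∀ t : ℝ, t ∈ Set.Ioo (0:ℝ) 1 →
      (t:ℂ)^(b-1) * ((1:ℂ) - (t:ℂ))^(c-b-1) * ∏ j, ((1:ℂ) - (t:ℂ) * x j)^(-(a j))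
        = ∑' m : Fin N → ℕ, F m t := by
    intro t ht
    set ψ : Fin N → ℕ → ℂ := fun j n => poch (a j) n / n.factorial * ((t:ℂ) * x j) ^ n with hψ
    have habs : ∀ j, ‖(t:ℂ) * x j‖ < 1 := by
      intro j
      rw [norm_mul, Complex.norm_real, Real.norm_eq_abs, _root_.abs_of_pos ht.1]
      calc t * ‖x j‖ ≤ 1 * ‖x j‖ :=
            mul_le_mul_of_nonneg_right ht.2.le (norm_nonneg _)
        _ < 1 := by rw [one_mul]; exact hx j
    have hψsum : ∀ j, Summable fun n => ‖ψ j n‖ := by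
      intro j
      refine (summable_norm_binom (a j) (norm_nonneg _) (habs j)).congr fun n => ?_
      simp [hψ, map_mul, map_div₀, Complex.norm_natCast, map_pow]
    have hprod : (∑' m : Fin N → ℕ, ∏ j, ψ j (m j)) = ∏ j, ((1:ℂ) - (t:ℂ) * x j) ^ (-(a j)) := by
      rw [(pi_tsum ψ hψsum).2]
      exact Finset.prod_congr rfl fun j _ => (binom_hasSum (a j) (habs j)).tsum_eq
    have hFt : ∀ m : Fin N → ℕ,
        F m t = ((t:ℂ)^(b-1) * ((1:ℂ)-(t:ℂ))^(c-b-1)) * ∏ j, ψ j (m j) := by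
      intro m
      have ht0 : (t:ℂ) ≠ 0 := Complex.ofReal_ne_zero.2 (ne_of_gt ht.1)
      have e1 : (t:ℂ) ^ (b + ((∑ j, m j : ℕ):ℂ) - 1)
          = (t:ℂ)^(b-1) * (t:ℂ)^((∑ j, m j : ℕ)) := by
        rw [← Complex.cpow_natCast, ← Complex.cpow_add _ _ ht0]
        congr 1
        ring
      have e2 : (∏ j, ψ j (m j)) = (t:ℂ)^((∑ j, m j : ℕ)) * ∏ j, φ j (m j) := by
        have : ∀ j : Fin N, ψ j (m j) = (t:ℂ)^(m j) * φ j (m j) := by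
          intro j
          rw [hψ, hφ]
          simp only [mul_pow]
          ring
        rw [Finset.prod_congr rfl fun j _ => this j, Finset.prod_mul_distrib,
          Finset.prod_pow_eq_pow_sum]
      simp only [hF, hG]
      rw [e1, e2]
      simp only [hcm]
      ring
    rw [← hprod, ← tsum_mul_left]
    exact tsum_congr fun m => (hFt m).symm
  -- a.e. identity
  have hae : (fun t : ℝ => (t:ℂ)^(b-1) * ((1:ℂ) - (t:ℂ))^(c-b-1) *
      ∏ j, ((1:ℂ) - (t:ℂ) * x j)^(-(a j))) =ᵐ[μ] fun t => ∑' m : Fin N → ℕ, F m t := by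
    have h1 : ∀ᵐ t ∂μ, t ∈ Set.Ioc (0:ℝ) 1 := ae_restrict_mem measurableSet_Ioc
    have h2 : ∀ᵐ t : ℝ ∂μ, t ≠ 1 := by
      refine ae_restrict_of_ae ?_
      rw [MeasureTheory.ae_iff]
      simp only [ne_eq, not_not]
      have he : {t : ℝ | t = 1} = {1} := by ext; simp
      rw [he]
      exact measure_singleton 1
    filter_upwards [h1, h2] with t ht hne
    exact hpt t ⟨ht.1, lt_of_le_of_ne ht.2 hne⟩
  -- each integral evaluates to a Beta value
  have hInt : ∀ m : Fin N → ℕ,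
      (∫ t, F m t ∂μ) = cm m * Complex.betaIntegral (b + (∑ j, m j : ℕ)) (c - b) := by
    intro m
    rw [Complex.betaIntegral, intervalIntegral.integral_of_le zero_le_one, ← hμ,
      ← integral_const_mul]
  -- summability of the integrals
  have hIsum : Summable (fun m : Fin N → ℕ => ∫ t, F m t ∂μ) := by
    refine Summable.of_norm_bounded (g := fun m => ‖cm m‖ * L.toReal) (hcmsum.mul_right _) fun m => ?_
    have h1 : ‖∫ t, F m t ∂μ‖ ≤ (∫⁻ t, ‖F m t‖₊ ∂μ).toReal := by
      rw [show (∫⁻ t, (‖F m t‖₊ : ENNReal) ∂μ) = ∫⁻ t, ‖F m t‖ₑ ∂μ from rfl,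
        ← MeasureTheory.ofReal_integral_norm_eq_lintegral_enorm ((hFint m))]
      rw [ENNReal.toReal_ofReal (integral_nonneg fun t => norm_nonneg _)]
      exact norm_integral_le_integral_norm _
    refine h1.trans ?_
    have h2 := hFlin m
    have h3 := ENNReal.toReal_mono (ENNReal.mul_ne_top ENNReal.coe_ne_top hLne) h2
    rwa [ENNReal.toReal_mul, ENNReal.coe_toReal, coe_nnnorm] at h3
  -- value identity
  have hval : (K * ∫ t in (0:ℝ)..1, (t : ℂ) ^ (b - 1) * ((1 : ℂ) - (t : ℂ)) ^ (c - b - 1) *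
      ∏ j, ((1 : ℂ) - (t : ℂ) * x j) ^ (-(a j)))
      = K * ∑' m : Fin N → ℕ, ∫ t, F m t ∂μ := by
    rw [intervalIntegral.integral_of_le zero_le_one, ← hμ, integral_congr_ae hae, hswap]
  -- termwise identity
  have hfun : ∀ m : Fin N → ℕ,
      (poch b (∑ j, m j) * ∏ j, poch (a j) (m j)) /
          (poch c (∑ j, m j) * ∏ j, (Nat.factorial (m j) : ℂ)) * ∏ j, x j ^ m j
        = K * ∫ t, F m t ∂μ := by
    intro m
    rw [hInt m]
    have e3 : cm m = (∏ j, poch (a j) (m j)) / (∏ j, (Nat.factorial (m j) : ℂ)) *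
        ∏ j, x j ^ m j := by
      simp only [hcm, hφ]
      rw [Finset.prod_mul_distrib, Finset.prod_div_distrib]
    rw [show K * (cm m * Complex.betaIntegral (b + (∑ j, m j : ℕ)) (c - b))
        = (K * Complex.betaIntegral (b + (∑ j, m j : ℕ)) (c - b)) * cm m by ring]
    rw [hK, coeff_eq hb hbc, e3]
    ring
  have H := hIsum.hasSum.mul_left K
  rw [← hval] at H
  exact H.congr_fun fun m => hfun m
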